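/- Let f : X → Y be an open continuous surjection of nonempty compact Hausdorff spaces. Then Hf : HX → HY has a degenerate (singleton) fiber if and only if f has a degenerate (singleton) fiber. -/

import Mathlib

open Set MeasureTheory Topology Filter

noncomputable section

universe u

/-- The index set for the product of closed intervals: pairs consisting of a continuous
real-valued function on `X` and a subinterval `(a,b)` of `[0,1]` with `0 ≤ a < b ≤ 1`. -/
abbrev HMIdx (X : Type u) [TopologicalSpace X] : Type u :=
  C(X, ℝ) × {p : ℝ × ℝ // 0 ≤ p.1 ∧ p.1 < p.2 ∧ p.2 ≤ 1}

/-- `α : ℝ → X` is a step function (on `[0,1)`): there is a partition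
`0 = t₀ < t₁ < ⋯ < tₙ = 1` such that `α` is constant on each `[tᵢ, tᵢ₊₁)`. -/
def IsStepFun {X : Type u} (α : ℝ → X) : Prop :=
  ∃ (n : ℕ) (t : Fin (n + 1) → ℝ), t 0 = 0 ∧ t (Fin.last n) = 1 ∧ StrictMono t ∧
    ∀ i : Fin n, ∀ s ∈ Set.Ico (t i.castSucc) (t i.succ), α s = α (t i.castSucc)

/-- The embedding of step functions into the product, whose `(φ,(a,b))`-th coordinate is
`(b-a)⁻¹ ∫_a^b φ(α(s)) ds`. -/
def hmEmbed {X : Type u} [TopologicalSpace X] (α : ℝ → X) : HMIdx X → ℝ :=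
  fun p => (p.2.1.2 - p.2.1.1)⁻¹ * ∫ s in p.2.1.1..p.2.1.2, p.1 (α s)

/-- `HX`, realized as the closure of the image of the set of step functions in the product. -/
def HSet (X : Type u) [TopologicalSpace X] : Set (HMIdx X → ℝ) :=
  closure (hmEmbed '' {α : ℝ → X | IsStepFun α})

/-- The coordinate-wise description of the map `Hf` on the ambient product:
`p_{φ_(a,b)} ∘ Hf = p_{(φ∘f)_(a,b)}`. -/
def Hmap {X Y : Type u} [TopologicalSpace X] [TopologicalSpace Y] (f : C(X, Y)) :
    (HMIdx X → ℝ) → HMIdx Y → ℝ :=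
  fun ν p => ν ⟨p.1.comp f, p.2⟩

theorem Hmap_mapsTo {X Y : Type u} [TopologicalSpace X] [TopologicalSpace Y] (f : C(X, Y)) :
    Set.MapsTo (Hmap f) (HSet X) (HSet Y) := by
  intro ν hν
  have hc : Continuous (Hmap f) := continuous_pi fun p => continuous_apply _
  have hsub : Hmap f '' (hmEmbed '' {α : ℝ → X | IsStepFun α}) ⊆
      hmEmbed '' {α : ℝ → Y | IsStepFun α} := by
    rintro _ ⟨_, ⟨α, hα, rfl⟩, rfl⟩
    refine ⟨f ∘ α, ?_, rfl⟩
    obtain ⟨n, t, h0, h1, hm, hstep⟩ := hα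
    exact ⟨n, t, h0, h1, hm, fun i s hs => congrArg f (hstep i s hs)⟩
  have h1 : Hmap f ν ∈ closure (Hmap f '' (hmEmbed '' {α : ℝ → X | IsStepFun α})) :=
    image_closure_subset_closure_image hc ⟨ν, hν, rfl⟩
  exact closure_mono hsub h1

/-- The map `Hf : HX → HY` induced by `f : X → Y`. -/
def HfSub {X Y : Type u} [TopologicalSpace X] [TopologicalSpace Y] (f : C(X, Y)) :
    ↥(HSet X) → ↥(HSet Y) :=
  Set.MapsTo.restrict (Hmap f) (HSet X) (HSet Y) (Hmap_mapsTo f)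

/-- The Hartman–Mycielski "concatenation" map `e : HX × HX × I → HX`, described
coordinatewise on the ambient product. -/
def emap {X : Type u} [TopologicalSpace X] (μ ν : HMIdx X → ℝ) (t : ℝ) : HMIdx X → ℝ :=
  fun p =>
    if hb : p.2.1.2 ≤ t then μ p
    else if ha : t ≤ p.2.1.1 then ν p
    else
      ((t - p.2.1.1) * μ ⟨p.1, ⟨(p.2.1.1, t), p.2.2.1, not_le.mp ha,
          (not_le.mp hb).le.trans p.2.2.2.2⟩⟩ +
        (p.2.1.2 - t) * ν ⟨p.1, ⟨(t, p.2.1.2), p.2.2.1.trans (not_le.mp ha).le,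
          not_le.mp hb, p.2.2.2.2⟩⟩) / (p.2.1.2 - p.2.1.1)

/-- A subset `A ⊆ HX` is `e`-convex if it is closed under the maps `e(·,·,t)`, `t ∈ [0,1]`. -/
def EConvex {X : Type u} [TopologicalSpace X] (A : Set (HMIdx X → ℝ)) : Prop :=
  ∀ α ∈ A, ∀ β ∈ A, ∀ t ∈ Set.Icc (0 : ℝ) 1, emap α β t ∈ A

/-- A subset of `HX` is `H`-convex if it is `e`-convex and convex. -/
def HConvexSet {X : Type u} [TopologicalSpace X] (A : Set (HMIdx X → ℝ)) : Prop :=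
  EConvex A ∧ Convex ℝ A

/-- The point `δ(x) ∈ HX`: all coordinates `p_{φ_(a,b)}` equal `φ(x)`. -/
def deltaH {X : Type u} [TopologicalSpace X] (x : X) : HMIdx X → ℝ := fun p => p.1 x

theorem isStepFun_const {X : Type u} (x : X) : IsStepFun (fun _ : ℝ => x) := by
  refine ⟨1, ![0, 1], by simp, by simp [Fin.last], ?_, fun i s _ => rfl⟩
  intro a b hab
  fin_cases a <;> fin_cases b <;> simp_all

theorem hmEmbed_const {X : Type u} [TopologicalSpace X] (x : X) :
    hmEmbed (fun _ : ℝ => x) = deltaH x := by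
  funext p
  obtain ⟨φ, ⟨⟨a, b⟩, ha, hab, hb⟩⟩ := p
  simp only [hmEmbed, deltaH, intervalIntegral.integral_const, smul_eq_mul]
  exact inv_mul_cancel_left₀ (sub_ne_zero.2 hab.ne') _

theorem deltaH_mem {X : Type u} [TopologicalSpace X] (x : X) : deltaH x ∈ HSet X := by
  rw [← hmEmbed_const]
  exact subset_closure ⟨_, isStepFun_const x, rfl⟩

/-- The natural inclusion `iX : P(X) → HX` (described on the ambient product):
`p_{φ_(a,b)}(iX(μ)) = ∫ φ dμ`. -/
def imapP {X : Type u} [TopologicalSpace X] [MeasurableSpace X]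
    (μ : ProbabilityMeasure X) : HMIdx X → ℝ :=
  fun p => ∫ x, p.1 x ∂(μ : Measure X)

/-!
If `f⁻¹(f x) = {x}`, then `δ(x)` is the only preimage of `δ(f x)`: on each subinterval a point
of `HX` acts on `C(X, ℝ)` as a positive normalized linear functional (a closed condition that
holds for step functions), and since `f` is closed, a Urysohn bump at `f x` pulled back along `f`
forces such a preimage to evaluate every `ψ` arbitrarily close to `ψ x`.

Conversely, if every fibre has two points, openness of `f` and compactness of `Y` give finitely
many functions `g₁, …, gₙ` on `X`, a selector `sel : Y → Fin n` and two sections `c₁, c₂` of `f`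
with `g_{sel y}(c₂ y) ≥ g_{sel y}(c₁ y) + 1/2`. For a step function `β` on `Y`, the lift `c₁ ∘ β`
and the lift switching to `c₂` where `sel ∘ β = j` differ by at least `1/(2n)` at the coordinate
`(g_j, (0,1))` for some `j`, by pigeonhole. The pairs in `HX × HX` with equal images under `Hf`
and such a separation form a compact set whose image under `Hf` contains every step function,
hence all of `HY`.
-/

theorem Fin.exists_mem_Ico_castSucc_succ {α : Type*} [LinearOrder α] :
    ∀ {n : ℕ} (t : Fin (n + 1) → α) {s : α}, s ∈ Ico (t 0) (t (Fin.last n)) →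
      ∃ i : Fin n, s ∈ Ico (t i.castSucc) (t i.succ)
  | 0, t, s, hs => by simp at hs
  | n + 1, t, s, hs => by
    by_cases hlt : s < t (Fin.last n).castSucc
    · obtain ⟨i, hi⟩ := Fin.exists_mem_Ico_castSucc_succ (t ∘ Fin.castSucc) ⟨hs.1, hlt⟩
      exact ⟨i.castSucc, hi⟩
    · exact ⟨Fin.last n, not_lt.1 hlt, hs.2⟩

theorem IsStepFun.comp {X Y : Type*} {α : ℝ → X} (hα : IsStepFun α) (g : X → Y) :
    IsStepFun (g ∘ α) := by
  obtain ⟨n, t, h0, h1, hmono, hconst⟩ := hα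
  exact ⟨n, t, h0, h1, hmono, fun i s hs => congrArg g (hconst i s hs)⟩

theorem IsStepFun.intervalIntegrable {α : ℝ → ℝ} (hα : IsStepFun α) {a b : ℝ}
    (ha : a ∈ Icc (0 : ℝ) 1) (hb : b ∈ Icc (0 : ℝ) 1) : IntervalIntegrable α volume a b := by
  obtain ⟨n, t, h0, h1, -, hconst⟩ := hα
  have hcover : Ico (0 : ℝ) 1 ⊆ ⋃ i : Fin n, Ico (t i.castSucc) (t i.succ) := fun s hs =>
    mem_iUnion.2 (Fin.exists_mem_Ico_castSucc_succ t (by rwa [h0, h1]))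
  have hIco : IntegrableOn α (Ico 0 1) :=
    (integrableOn_finite_iUnion.2 fun i => (integrableOn_const measure_Ico_lt_top.ne).congr_fun
      (fun s hs => (hconst i s hs).symm) measurableSet_Ico).mono_set hcover
  exact (((integrableOn_Icc_iff_integrableOn_Ico enorm_ne_top).2 hIco).mono_set
    (uIcc_subset_Icc ha hb)).intervalIntegrable

section HSet

variable {X Y : Type u} [TopologicalSpace X] [TopologicalSpace Y]

def unitSubinterval : {p : ℝ × ℝ // 0 ≤ p.1 ∧ p.1 < p.2 ∧ p.2 ≤ 1} :=
  ⟨(0, 1), le_rfl, zero_lt_one, le_rfl⟩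

theorem hmEmbed_unitSubinterval (α : ℝ → X) (φ : C(X, ℝ)) :
    hmEmbed α (φ, unitSubinterval) = ∫ s in (0 : ℝ)..1, φ (α s) := by
  simp [hmEmbed, unitSubinterval]

theorem Hmap_hmEmbed (f : C(X, Y)) (α : ℝ → X) : Hmap f (hmEmbed α) = hmEmbed (f ∘ α) := rfl

@[fun_prop]
theorem continuous_Hmap (f : C(X, Y)) : Continuous (Hmap f) :=
  continuous_pi fun _ => continuous_apply _

theorem HSet_subset_of_isClosed {C : Set (HMIdx X → ℝ)} (hC : IsClosed C)
    (h : ∀ α : ℝ → X, IsStepFun α → hmEmbed α ∈ C) : HSet X ⊆ C :=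
  closure_minimal (by rintro _ ⟨α, hα, rfl⟩; exact h α hα) hC

theorem hmEmbed_mem_Icc [CompactSpace X] (α : ℝ → X) (p : HMIdx X) :
    hmEmbed α p ∈ Icc (-‖p.1‖) ‖p.1‖ := by
  obtain ⟨φ, ⟨⟨a, b⟩, -, hab, -⟩⟩ := p
  have hba : 0 < b - a := sub_pos.2 hab
  have hint : |∫ s in a..b, φ (α s)| ≤ ‖φ‖ * |b - a| :=
    intervalIntegral.norm_integral_le_of_norm_le_const fun s _ => φ.norm_coe_le_norm (α s)
  rw [abs_of_pos hba] at hint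
  rw [mem_Icc, ← abs_le]
  simp only [hmEmbed, abs_mul, abs_inv, abs_of_pos hba]
  rw [inv_mul_le_iff₀ hba]
  linarith

theorem isCompact_HSet [CompactSpace X] : IsCompact (HSet X) :=
  (isCompact_univ_pi fun _ : HMIdx X => isCompact_Icc).of_isClosed_subset isClosed_closure
    (HSet_subset_of_isClosed (isClosed_set_pi fun _ _ => isClosed_Icc)
      fun α _ => mem_univ_pi.2 (hmEmbed_mem_Icc α))

theorem hmEmbed_affine_le {α : ℝ → X} (hα : IsStepFun α)
    (ab : {p : ℝ × ℝ // 0 ≤ p.1 ∧ p.1 < p.2 ∧ p.2 ≤ 1}) {ψ φ : C(X, ℝ)} {c₁ c₂ d : ℝ}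
    (h : ∀ x, c₁ * ψ x + c₂ * φ x ≤ d) :
    c₁ * hmEmbed α (ψ, ab) + c₂ * hmEmbed α (φ, ab) ≤ d := by
  obtain ⟨⟨a, b⟩, ha, hab, hb⟩ := ab
  have hint : ∀ g : X → ℝ, IntervalIntegrable (fun s => g (α s)) volume a b := fun g =>
    (hα.comp g).intervalIntegrable ⟨ha, by linarith⟩ ⟨by linarith, hb⟩
  have hmono : ∫ s in a..b, (c₁ * ψ (α s) + c₂ * φ (α s)) ≤ ∫ _ in a..b, d :=
    intervalIntegral.integral_mono_on hab.le (hint fun x => c₁ * ψ x + c₂ * φ x)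
      intervalIntegrable_const fun s _ => h (α s)
  rw [intervalIntegral.integral_add ((hint _).const_mul c₁) ((hint _).const_mul c₂),
    intervalIntegral.integral_const_mul, intervalIntegral.integral_const_mul,
    intervalIntegral.integral_const, smul_eq_mul] at hmono
  have hba : 0 < b - a := sub_pos.2 hab
  calc c₁ * hmEmbed α (ψ, ⟨(a, b), ha, hab, hb⟩) + c₂ * hmEmbed α (φ, ⟨(a, b), ha, hab, hb⟩)
      = (b - a)⁻¹ * ((c₁ * ∫ s in a..b, ψ (α s)) + c₂ * ∫ s in a..b, φ (α s)) := by
        simp only [hmEmbed]; ring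
    _ ≤ (b - a)⁻¹ * ((b - a) * d) := by gcongr
    _ = d := by field_simp

theorem affine_le_of_mem_HSet {w : HMIdx X → ℝ} (hw : w ∈ HSet X)
    (ab : {p : ℝ × ℝ // 0 ≤ p.1 ∧ p.1 < p.2 ∧ p.2 ≤ 1}) {ψ φ : C(X, ℝ)} {c₁ c₂ d : ℝ}
    (h : ∀ x, c₁ * ψ x + c₂ * φ x ≤ d) : c₁ * w (ψ, ab) + c₂ * w (φ, ab) ≤ d :=
  HSet_subset_of_isClosed (C := {v | c₁ * v (ψ, ab) + c₂ * v (φ, ab) ≤ d})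
    (isClosed_le (by fun_prop) continuous_const) (fun _ hα => hmEmbed_affine_le hα ab h) hw

end HSet

section DegenerateFiber

variable {X Y : Type u} [TopologicalSpace X] [TopologicalSpace Y] [CompactSpace X]
  [CompactSpace Y] [T2Space Y]

theorem exists_continuous_one_zero_of_preimage_subset (f : C(X, Y)) {y : Y} {U : Set X}
    (hU : IsOpen U) (hyU : f ⁻¹' {y} ⊆ U) :
    ∃ φ : C(Y, ℝ), φ y = 1 ∧ (∀ z, φ z ∈ Icc (0 : ℝ) 1) ∧ ∀ x ∉ U, φ (f x) = 0 := by
  have hclosed : IsClosed (f '' Uᶜ) := f.continuous.isClosedMap _ hU.isClosed_compl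
  have hy : y ∉ f '' Uᶜ := fun ⟨x, hxU, hfx⟩ => hxU (hyU hfx)
  obtain ⟨φ, hφ0, hφ1, hφ01⟩ := exists_continuous_zero_one_of_isClosed hclosed
    isClosed_singleton (disjoint_singleton_right.2 hy)
  exact ⟨φ, hφ1 rfl, hφ01, fun x hx => hφ0 ⟨x, hx, rfl⟩⟩

theorem eq_deltaH_of_Hmap_eq_deltaH (f : C(X, Y)) {x : X} (hx : ∀ x', f x' = f x → x' = x)
    {μ : HMIdx X → ℝ} (hμ : μ ∈ HSet X) (hfμ : Hmap f μ = deltaH (f x)) : μ = deltaH x := by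
  ext ⟨ψ, ab⟩
  refine eq_of_forall_dist_le fun ε hε => ?_
  obtain ⟨φ, hφy, hφ01, hφ0⟩ := exists_continuous_one_zero_of_preimage_subset f
    (U := {ξ | |ψ ξ - ψ x| < ε}) (isOpen_lt (by fun_prop) continuous_const)
    fun ξ hξ => by simp [hx ξ hξ, hε]
  have hφμ : μ (φ.comp f, ab) = 1 := (congrFun hfμ (φ, ab)).trans hφy
  -- the bump `φ ∘ f` confines `ψ` to within `ε` of `ψ x` up to a penalty of `2 ‖ψ‖`
  have hbound : ∀ s : ℝ, |s| = 1 → s * (μ (ψ, ab) - ψ x) ≤ ε := by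
    intro s hs
    have hpt : ∀ ξ, s * ψ ξ + 2 * ‖ψ‖ * φ.comp f ξ ≤ s * ψ x + ε + 2 * ‖ψ‖ := by
      intro ξ
      have hsξ : s * (ψ ξ - ψ x) ≤ |ψ ξ - ψ x| := by
        simpa [abs_mul, hs] using le_abs_self (s * (ψ ξ - ψ x))
      rw [ContinuousMap.comp_apply]
      by_cases hξ : |ψ ξ - ψ x| < ε
      · have := mul_le_mul_of_nonneg_left (hφ01 (f ξ)).2 (by positivity : 0 ≤ 2 * ‖ψ‖)
        linarith
      · have := norm_sub_le (ψ ξ) (ψ x)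
        rw [Real.norm_eq_abs] at this
        rw [hφ0 ξ hξ]
        linarith [ψ.norm_coe_le_norm ξ, ψ.norm_coe_le_norm x]
    have hμψ := affine_le_of_mem_HSet hμ ab hpt
    rw [hφμ] at hμψ
    linarith
  change |μ (ψ, ab) - ψ x| ≤ ε
  rw [abs_le]
  constructor <;> linarith [hbound 1 (by simp), hbound (-1) (by simp)]

end DegenerateFiber

section NondegenerateFibers

variable {X Y : Type u} [TopologicalSpace X]

theorem exists_separated_lifts {n : ℕ} (g : Fin n → C(X, ℝ)) (sel : Y → Fin n) (c₁ c₂ : Y → X)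
    (hgap : ∀ y, g (sel y) (c₁ y) + 1 / 2 ≤ g (sel y) (c₂ y)) {β : ℝ → Y} (hβ : IsStepFun β) :
    ∃ j, hmEmbed (c₁ ∘ β) (g j, unitSubinterval) + 1 / (2 * n) ≤
      hmEmbed ((fun y => if sel y = j then c₂ y else c₁ y) ∘ β) (g j, unitSubinterval) := by
  set D : Fin n → Y → ℝ := fun j y => g j (if sel y = j then c₂ y else c₁ y) - g j (c₁ y)
  have hD : ∀ y, 1 / 2 ≤ ∑ j, D j y := by
    intro y
    have hDj : ∀ j, D j y = if sel y = j then g (sel y) (c₂ y) - g (sel y) (c₁ y) else 0 := by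
      intro j
      split_ifs with h <;> simp [D, h]
    simp only [hDj, Finset.sum_ite_eq, Finset.mem_univ, if_true]
    linarith [hgap y]
  have hint : ∀ h : Y → ℝ, IntervalIntegrable (fun s => h (β s)) volume 0 1 := fun h =>
    (hβ.comp h).intervalIntegrable (left_mem_Icc.2 zero_le_one) (right_mem_Icc.2 zero_le_one)
  have hn : (0 : ℝ) < n := by exact_mod_cast (sel (β 0)).pos
  have hsum : ∑ _j : Fin n, 1 / (2 * n : ℝ) ≤ ∑ j, ∫ s in (0 : ℝ)..1, D j (β s) :=
    calc ∑ _j : Fin n, 1 / (2 * n : ℝ) = ∫ _ in (0 : ℝ)..1, (1 / 2 : ℝ) := by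
          simp only [Finset.sum_const, Finset.card_univ, Fintype.card_fin, nsmul_eq_mul,
            intervalIntegral.integral_const, sub_zero, one_smul]
          field_simp
      _ ≤ ∫ s in (0 : ℝ)..1, ∑ j, D j (β s) :=
          intervalIntegral.integral_mono_on zero_le_one intervalIntegrable_const
            (hint fun y => ∑ j, D j y) fun s _ => hD (β s)
      _ = ∑ j, ∫ s in (0 : ℝ)..1, D j (β s) :=
          intervalIntegral.integral_finsetSum fun j _ => hint (D j)
  obtain ⟨j, -, hj⟩ := Finset.exists_le_of_sum_le ⟨sel (β 0), Finset.mem_univ _⟩ hsum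
  refine ⟨j, ?_⟩
  rw [intervalIntegral.integral_sub (hint fun y => g j (if sel y = j then c₂ y else c₁ y))
    (hint fun y => g j (c₁ y))] at hj
  simp only [hmEmbed_unitSubinterval, Function.comp_apply]
  linarith

variable [TopologicalSpace Y]

theorem exists_separated_sections [CompactSpace X] [T2Space X] [CompactSpace Y] (f : C(X, Y))
    (hopen : IsOpenMap f) (hfib : ∀ y, (f ⁻¹' {y}).Nontrivial) :
    ∃ (n : ℕ) (g : Fin n → C(X, ℝ)) (sel : Y → Fin n) (c₁ c₂ : Y → X),
      (∀ y, f (c₁ y) = y) ∧ (∀ y, f (c₂ y) = y) ∧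
        ∀ y, g (sel y) (c₁ y) + 1 / 2 ≤ g (sel y) (c₂ y) := by
  set W : C(X, ℝ) → Set Y := fun g => f '' {x | g x < 1 / 4} ∩ f '' {x | 3 / 4 < g x}
  have hWopen : ∀ g, IsOpen (W g) := fun g =>
    (hopen _ (isOpen_lt g.continuous continuous_const)).inter
      (hopen _ (isOpen_lt continuous_const g.continuous))
  have hWcover : ∀ y, ∃ g, y ∈ W g := by
    intro y
    obtain ⟨x₁, hx₁, x₂, hx₂, hne⟩ := hfib y
    obtain ⟨g, hg₁, hg₂, -⟩ := exists_continuous_zero_one_of_isClosed isClosed_singleton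
      isClosed_singleton (disjoint_singleton.2 hne)
    exact ⟨g, ⟨x₁, by norm_num [hg₁ rfl], hx₁⟩, ⟨x₂, by norm_num [hg₂ rfl], hx₂⟩⟩
  obtain ⟨t, ht⟩ := isCompact_univ.elim_finite_subcover W hWopen
    fun y _ => mem_iUnion.2 (hWcover y)
  have hsel : ∀ y, ∃ j : Fin t.card, y ∈ W (t.equivFin.symm j) := by
    intro y
    obtain ⟨g, hg, hy⟩ := mem_iUnion₂.1 (ht (mem_univ y))
    exact ⟨t.equivFin ⟨g, hg⟩, by simpa using hy⟩
  choose sel hsel using hsel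
  choose c₁ hc₁ hfc₁ using fun y => (hsel y).1
  choose c₂ hc₂ hfc₂ using fun y => (hsel y).2
  exact ⟨t.card, fun j => t.equivFin.symm j, sel, c₁, c₂, hfc₁, hfc₂,
    fun y => by linarith [(hc₁ y).out, (hc₂ y).out]⟩

theorem exists_ne_Hmap_eq_of_separated_lifts [CompactSpace X] (f : C(X, Y)) {ι : Type*}
    [Finite ι] (q : ι → HMIdx X) {δ : ℝ} (hδ : 0 < δ)
    (hlift : ∀ β : ℝ → Y, IsStepFun β → ∃ i, ∃ α₁ α₂ : ℝ → X, IsStepFun α₁ ∧ IsStepFun α₂ ∧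
      f ∘ α₁ = β ∧ f ∘ α₂ = β ∧ hmEmbed α₁ (q i) + δ ≤ hmEmbed α₂ (q i))
    {ν : HMIdx Y → ℝ} (hν : ν ∈ HSet Y) :
    ∃ μ₁ ∈ HSet X, ∃ μ₂ ∈ HSet X, Hmap f μ₁ = ν ∧ Hmap f μ₂ = ν ∧ μ₁ ≠ μ₂ := by
  set C : Set ((HMIdx X → ℝ) × (HMIdx X → ℝ)) := HSet X ×ˢ HSet X ∩
    {p | Hmap f p.1 = Hmap f p.2} ∩ ⋃ i, {p | p.1 (q i) + δ ≤ p.2 (q i)}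
  have hC : IsCompact C :=
    ((isCompact_HSet.prod isCompact_HSet).inter_right
      (isClosed_eq (by fun_prop) (by fun_prop))).inter_right
      (isClosed_iUnion_of_finite fun i => isClosed_le (by fun_prop) (by fun_prop))
  have hsub : HSet Y ⊆ (fun p => Hmap f p.1) '' C := by
    refine HSet_subset_of_isClosed (hC.image (by fun_prop)).isClosed fun β hβ => ?_
    obtain ⟨i, α₁, α₂, hα₁, hα₂, hfα₁, hfα₂, hgap⟩ := hlift β hβ
    refine ⟨(hmEmbed α₁, hmEmbed α₂), ⟨⟨⟨subset_closure ⟨α₁, hα₁, rfl⟩,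
      subset_closure ⟨α₂, hα₂, rfl⟩⟩, ?_⟩, mem_iUnion.2 ⟨i, hgap⟩⟩, ?_⟩
    · simp only [mem_ofPred_eq, Hmap_hmEmbed, hfα₁, hfα₂]
    · simp only [Hmap_hmEmbed, hfα₁]
  obtain ⟨⟨μ₁, μ₂⟩, ⟨⟨⟨hμ₁, hμ₂⟩, heq⟩, hgap⟩, rfl⟩ := hsub hν
  obtain ⟨i, hi⟩ := mem_iUnion.1 hgap
  refine ⟨μ₁, hμ₁, μ₂, hμ₂, rfl, heq.symm, fun h => ?_⟩
  simp only [mem_ofPred_eq, h] at hi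
  linarith

theorem exists_ne_Hmap_eq [CompactSpace X] [T2Space X] [CompactSpace Y] [Nonempty Y]
    (f : C(X, Y)) (hopen : IsOpenMap f) (hfib : ∀ y, (f ⁻¹' {y}).Nontrivial)
    {ν : HMIdx Y → ℝ} (hν : ν ∈ HSet Y) :
    ∃ μ₁ ∈ HSet X, ∃ μ₂ ∈ HSet X, Hmap f μ₁ = ν ∧ Hmap f μ₂ = ν ∧ μ₁ ≠ μ₂ := by
  obtain ⟨n, g, sel, c₁, c₂, hc₁, hc₂, hgap⟩ := exists_separated_sections f hopen hfib
  have hn : (0 : ℝ) < n := by exact_mod_cast (sel (Classical.arbitrary Y)).pos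
  refine exists_ne_Hmap_eq_of_separated_lifts f (fun j => (g j, unitSubinterval))
    (by positivity : (0 : ℝ) < 1 / (2 * n)) (fun β hβ => ?_) hν
  obtain ⟨j, hj⟩ := exists_separated_lifts g sel c₁ c₂ hgap hβ
  refine ⟨j, _, _, hβ.comp _, hβ.comp _, ?_, ?_, hj⟩
  · funext s
    exact hc₁ (β s)
  · funext s
    simp only [Function.comp_apply]
    split_ifs
    exacts [hc₂ _, hc₁ _]

end NondegenerateFibers

theorem statement8_general {X Y : Type u} [TopologicalSpace X] [CompactSpace X] [T2Space X] [TopologicalSpace Y] [CompactSpace Y] [T2Space Y] [Nonempty Y]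
    (f : C(X, Y)) (hf : Function.Surjective f) (hopen : IsOpenMap (⇑f)) :
    (∃ ν : ↥(HSet Y), ∃! μ : ↥(HSet X), HfSub f μ = ν) ↔ (∃ y : Y, ∃! x : X, f x = y) := by
  constructor
  · rintro ⟨ν, _, -, huniq⟩
    by_contra! hdeg
    have hfib : ∀ y, (f ⁻¹' {y}).Nontrivial := fun y => by
      obtain ⟨x, rfl⟩ := hf y
      exact not_subsingleton_iff.1 fun hsub => hdeg (f x) ⟨x, rfl, fun x' hx' => hsub hx' rfl⟩
    obtain ⟨μ₁, hμ₁, μ₂, hμ₂, hfμ₁, hfμ₂, hne⟩ := exists_ne_Hmap_eq f hopen hfib ν.2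
    have h₁ := huniq ⟨μ₁, hμ₁⟩ (Subtype.ext hfμ₁)
    have h₂ := huniq ⟨μ₂, hμ₂⟩ (Subtype.ext hfμ₂)
    exact hne (congrArg Subtype.val (h₁.trans h₂.symm))
  · rintro ⟨_, x, rfl, hx⟩
    refine ⟨⟨deltaH (f x), deltaH_mem _⟩, ⟨deltaH x, deltaH_mem x⟩, rfl, fun μ hμ => ?_⟩
    exact Subtype.ext (eq_deltaH_of_Hmap_eq_deltaH f hx μ.2 (congrArg Subtype.val hμ))

theorem statement8 {X Y : Type u} [TopologicalSpace X] [CompactSpace X] [T2Space X] [Nonempty X] [TopologicalSpace Y] [CompactSpace Y] [T2Space Y] [Nonempty Y]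
    (f : C(X, Y)) (hf : Function.Surjective f) (hopen : IsOpenMap (⇑f)) :
    (∃ ν : ↥(HSet Y), ∃! μ : ↥(HSet X), HfSub f μ = ν) ↔ (∃ y : Y, ∃! x : X, f x = y) :=
  statement8_general f hf hopen

end
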